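/- Let k be an algebraically closed field of characteristic zero and let u = x^a y^b z^c and v = x^d y^e z^f in k⟦x,y,z⟧, where the exponent vectors (a,b,c), (d,e,f) ∈ ℕ³ are linearly independent over ℚ. Let w ∈ k⟦x,y,z⟧ be such that the formal Jacobian determinant of (u, v, w) with respect to (x, y, z) equals x^p y^q z^r·δ for some natural numbers p, q, r and some unit δ. Then there exists a regular system of parameters x̄, ȳ, z̄ of k⟦x,y,z⟧ with u = x̄^a ȳ^b z̄^c and v = x̄^d ȳ^e z̄^f, a monomial N = x̄^g ȳ^h z̄^i whose exponent vector (g,h,i) is ℚ-linearly independent from (a,b,c) and (d,e,f), and a power series G in x̄, ȳ, z̄ every monomial of which has exponent vector lying in the ℚ-span of (a,b,c) and (d,e,f) and is not divisible by N, such that w = G + N. -/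

import Mathlib

open MvPowerSeries

/-- The formal partial derivative of a multivariate power series with respect to the
variable `s`, defined by termwise differentiation. -/
noncomputable def mvPderiv {σ : Type*} [DecidableEq σ] {R : Type*} [CommRing R]
    (s : σ) (f : MvPowerSeries σ R) : MvPowerSeries σ R :=
  fun m => (m s + 1 : ℕ) • MvPowerSeries.coeff (m + Finsupp.single s 1) f

/-- The formal Jacobian determinant of a triple of power series in three variables:
the determinant of the `3×3` matrix of formal partial derivatives. -/
noncomputable def mvJacobian {R : Type*} [CommRing R]
    (u v w : MvPowerSeries (Fin 3) R) : MvPowerSeries (Fin 3) R :=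
  Matrix.det (Matrix.of fun i j => mvPderiv j (![u, v, w] i))

/-- Substitution of three power series `A, B, C` (of positive order) for the variables of a
three-variable power series `G`; the coefficient of `G(A,B,C)` at `m` is the (finitely
supported) sum of the contributions of the terms `G_{p} A^{p₁} B^{p₂} C^{p₃}`. -/
noncomputable def subst3 {R : Type*} [CommRing R] (G : MvPowerSeries (Fin 3) R)
    (A B C : MvPowerSeries (Fin 3) R) : MvPowerSeries (Fin 3) R :=
  fun m => ∑ᶠ p : ℕ × ℕ × ℕ,
    MvPowerSeries.coeff
        (Finsupp.single 0 p.1 + Finsupp.single 1 p.2.1 + Finsupp.single 2 p.2.2) G *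
      MvPowerSeries.coeff m (A ^ p.1 * B ^ p.2.1 * C ^ p.2.2)

/-- A triple of elements of `k⟦x,y,z⟧` is a regular system of parameters if all three have
zero constant term (i.e. lie in the maximal ideal `m`) and their residues form a basis of
`m/m²`, equivalently the matrix of their linear coefficients is invertible. -/
def IsRegularSystem {k : Type*} [Field k] (a b c : MvPowerSeries (Fin 3) k) : Prop :=
  MvPowerSeries.constantCoeff a = 0 ∧
  MvPowerSeries.constantCoeff b = 0 ∧
  MvPowerSeries.constantCoeff c = 0 ∧
  Matrix.det (Matrix.of fun i j =>
    MvPowerSeries.coeff (Finsupp.single j 1) (![a, b, c] i)) ≠ 0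

section Helpers

variable {k : Type*} [Field k]

lemma fin3_decomp (m : Fin 3 →₀ ℕ) :
    m = Finsupp.single 0 (m 0) + Finsupp.single 1 (m 1) + Finsupp.single 2 (m 2) := by
  ext j; fin_cases j <;> simp [Finsupp.single_apply]

lemma fin3_le_iff (N m : Fin 3 →₀ ℕ) : N ≤ m ↔ N 0 ≤ m 0 ∧ N 1 ≤ m 1 ∧ N 2 ≤ m 2 := by
  rw [Finsupp.le_def]
  constructor
  · intro h; exact ⟨h 0, h 1, h 2⟩
  · rintro ⟨h0, h1, h2⟩ j; fin_cases j <;> assumption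

lemma fin3_deg_lt {μ m : Fin 3 →₀ ℕ} (h : μ ≤ m) (hne : μ ≠ m) :
    μ 0 + μ 1 + μ 2 < m 0 + m 1 + m 2 := by
  rw [Finsupp.le_def] at h
  have h0 := h 0; have h1 := h 1; have h2 := h 2
  by_contra hc
  apply hne
  ext j
  fin_cases j
  · show μ 0 = m 0; omega
  · show μ 1 = m 1; omega
  · show μ 2 = m 2; omega

lemma mono3 (α β γ : ℕ) : (X 0 : MvPowerSeries (Fin 3) k) ^ α * X 1 ^ β * X 2 ^ γ =
    monomial (Finsupp.single 0 α + Finsupp.single 1 β + Finsupp.single 2 γ) 1 := by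
  rw [X_pow_eq, X_pow_eq, X_pow_eq, monomial_mul_monomial, monomial_mul_monomial, one_mul, one_mul]

lemma coeff_mvPderiv (s : Fin 3) (f : MvPowerSeries (Fin 3) k) (m : Fin 3 →₀ ℕ) :
    MvPowerSeries.coeff m (mvPderiv s f) =
      (m s + 1 : ℕ) * MvPowerSeries.coeff (m + Finsupp.single s 1) f := by
  rw [MvPowerSeries.coeff_apply, mvPderiv, nsmul_eq_mul]

lemma pderiv_monomial_one (j : Fin 3) (A : Fin 3 →₀ ℕ) :
    mvPderiv j (monomial A 1) = MvPowerSeries.C (A j : k) *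
      monomial (A - Finsupp.single j 1) 1 := by
  ext m
  rw [coeff_mvPderiv, MvPowerSeries.coeff_monomial, MvPowerSeries.coeff_C_mul,
    MvPowerSeries.coeff_monomial]
  by_cases hj : A j = 0
  · have h1 : (m + Finsupp.single j 1) ≠ A := by
      intro he; apply_fun (fun t => t j) at he; simp [hj] at he
    rw [if_neg h1, hj]
    push_cast
    ring
  · have hAj : Finsupp.single j 1 ≤ A := by rw [Finsupp.single_le_iff]; omega
    by_cases hm : m + Finsupp.single j 1 = A
    · have hmA : m = A - Finsupp.single j 1 := by
        apply add_left_injective (Finsupp.single j 1)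
        show m + _ = A - _ + _
        rw [tsub_add_cancel_of_le hAj]; exact hm
      have hj' : A j = m j + 1 := by rw [← hm]; simp
      rw [if_pos hm, if_pos hmA, hj']
    · have hne : m ≠ A - Finsupp.single j 1 := by
        intro he; apply hm; rw [he, tsub_add_cancel_of_le hAj]
      rw [if_neg hm, if_neg hne, mul_zero, mul_zero]

/-- `x_j ∂_j w` as a raw coefficient function. -/
noncomputable def theta (j : Fin 3) (w : MvPowerSeries (Fin 3) k) : MvPowerSeries (Fin 3) k :=
  fun m => (m j : k) * MvPowerSeries.coeff m w

lemma single_le_iff' (j : Fin 3) (m : Fin 3 →₀ ℕ) :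
    Finsupp.single j 1 ≤ m ↔ 1 ≤ m j := Finsupp.single_le_iff

lemma X_mul_pderiv (j : Fin 3) (w : MvPowerSeries (Fin 3) k) :
    X j * mvPderiv j w = theta j w := by
  ext m
  rw [X_def, MvPowerSeries.coeff_monomial_mul]
  show _ = (m j : k) * MvPowerSeries.coeff m w
  by_cases hm : Finsupp.single j 1 ≤ m
  · have hmj : 1 ≤ m j := (single_le_iff' j m).mp hm
    rw [if_pos hm, coeff_mvPderiv, tsub_add_cancel_of_le hm, one_mul]
    have : (m - Finsupp.single j 1 : Fin 3 →₀ ℕ) j = m j - 1 := by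
      rw [Finsupp.tsub_apply, Finsupp.single_apply, if_pos rfl]
    rw [this, Nat.sub_add_cancel hmj]
  · have : m j = 0 := by
      rw [single_le_iff'] at hm; omega
    rw [if_neg hm, this]
    norm_num

lemma X_mul_pderiv_monomial (j : Fin 3) (A : Fin 3 →₀ ℕ) :
    X j * mvPderiv j (monomial A 1) =
      MvPowerSeries.C (A j : k) * monomial A 1 := by
  rw [pderiv_monomial_one]
  by_cases hj : A j = 0
  · rw [hj]; push_cast; rw [map_zero, zero_mul, zero_mul, mul_zero]
  · have hAj : Finsupp.single j 1 ≤ A := by rw [Finsupp.single_le_iff]; omega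
    rw [X_def, mul_left_comm, monomial_mul_monomial, one_mul,
      add_tsub_cancel_of_le hAj]

/-- The "logarithmic" first-order operator `det(A, B, x∂) applied to w`. -/
noncomputable def Dop (A B : Fin 3 →₀ ℕ) (w : MvPowerSeries (Fin 3) k) :
    MvPowerSeries (Fin 3) k :=
  fun m => ((((A 1 : ℤ) * B 2 - (A 2 : ℤ) * B 1) * m 0 +
      ((A 2 : ℤ) * B 0 - (A 0 : ℤ) * B 2) * m 1 +
      ((A 0 : ℤ) * B 1 - (A 1 : ℤ) * B 0) * m 2 : ℤ) : k) * MvPowerSeries.coeff m w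

lemma Dop_eq (A B : Fin 3 →₀ ℕ) (w : MvPowerSeries (Fin 3) k) :
    Dop A B w =
      MvPowerSeries.C ((((A 1 : ℤ) * B 2 - (A 2 : ℤ) * B 1 : ℤ) : k)) * theta 0 w +
      MvPowerSeries.C ((((A 2 : ℤ) * B 0 - (A 0 : ℤ) * B 2 : ℤ) : k)) * theta 1 w +
      MvPowerSeries.C ((((A 0 : ℤ) * B 1 - (A 1 : ℤ) * B 0 : ℤ) : k)) * theta 2 w := by
  ext m
  rw [map_add, map_add, MvPowerSeries.coeff_C_mul, MvPowerSeries.coeff_C_mul,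
    MvPowerSeries.coeff_C_mul]
  simp only [MvPowerSeries.coeff_apply, Dop, theta]
  push_cast
  ring

lemma jac_main (A B : Fin 3 →₀ ℕ) (w : MvPowerSeries (Fin 3) k) :
    X 0 * X 1 * X 2 * mvJacobian (monomial A 1) (monomial B 1) w
      = monomial (A + B) 1 * Dop A B w := by
  have hU := fun j => X_mul_pderiv_monomial (k := k) j A
  have hV := fun j => X_mul_pderiv_monomial (k := k) j B
  have hW := fun j => X_mul_pderiv (k := k) j w
  rw [mvJacobian, Matrix.det_fin_three]
  simp only [Matrix.of_apply, Matrix.cons_val', Matrix.cons_val_zero, Matrix.empty_val',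
    Matrix.cons_val_fin_one, Matrix.cons_val_one, Matrix.head_cons, Matrix.head_fin_const,
    Matrix.cons_val_two, Matrix.tail_cons]
  trans ((X 0 * mvPderiv 0 (monomial A 1)) * (X 1 * mvPderiv 1 (monomial B 1)) *
        (X 2 * mvPderiv 2 w)
      - (X 0 * mvPderiv 0 (monomial A 1)) * (X 2 * mvPderiv 2 (monomial B 1)) *
        (X 1 * mvPderiv 1 w)
      - (X 1 * mvPderiv 1 (monomial A 1)) * (X 0 * mvPderiv 0 (monomial B 1)) *
        (X 2 * mvPderiv 2 w)
      + (X 1 * mvPderiv 1 (monomial A 1)) * (X 2 * mvPderiv 2 (monomial B 1)) *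
        (X 0 * mvPderiv 0 w)
      + (X 2 * mvPderiv 2 (monomial A 1)) * (X 0 * mvPderiv 0 (monomial B 1)) *
        (X 1 * mvPderiv 1 w)
      - (X 2 * mvPderiv 2 (monomial A 1)) * (X 1 * mvPderiv 1 (monomial B 1)) *
        (X 0 * mvPderiv 0 w))
  · ring
  · rw [hU 0, hU 1, hU 2, hV 0, hV 1, hV 2, hW 0, hW 1, hW 2, Dop_eq,
      show (monomial (A + B)) (1 : k) = monomial A 1 * monomial B 1 by
        rw [monomial_mul_monomial, one_mul]]
    simp only [Int.cast_sub, Int.cast_mul, Int.cast_natCast, map_sub, map_mul]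
    ring

lemma cancel_monomial {S Q : Fin 3 →₀ ℕ} {D δ : MvPowerSeries (Fin 3) k}
    (hδ : MvPowerSeries.constantCoeff δ ≠ 0)
    (h : monomial S 1 * D = monomial Q 1 * δ) :
    S ≤ Q ∧ ∀ μ, MvPowerSeries.coeff μ D =
      MvPowerSeries.coeff μ (monomial (Q - S) 1 * δ) := by
  have hSQ : S ≤ Q := by
    have h1 := congrArg (MvPowerSeries.coeff Q) h
    rw [MvPowerSeries.coeff_monomial_mul, MvPowerSeries.coeff_monomial_mul,
      if_pos le_rfl, tsub_self, MvPowerSeries.coeff_zero_eq_constantCoeff_apply] at h1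
    simp only [one_mul] at h1
    by_contra hc
    rw [if_neg hc] at h1
    exact hδ h1.symm
  refine ⟨hSQ, fun μ => ?_⟩
  have h2 := congrArg (MvPowerSeries.coeff (S + μ)) h
  rw [MvPowerSeries.coeff_add_monomial_mul, one_mul] at h2
  rw [h2, MvPowerSeries.coeff_monomial_mul, MvPowerSeries.coeff_monomial_mul]
  have hiff : Q ≤ S + μ ↔ Q - S ≤ μ := by
    rw [tsub_le_iff_left]
  by_cases hq : Q - S ≤ μ
  · rw [if_pos (hiff.mpr hq), if_pos hq, one_mul, one_mul]
    have hidx : S + μ - Q = μ - (Q - S) := by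
      ext j
      have h1 := Finsupp.le_def.mp hSQ j
      have h2 := Finsupp.le_def.mp hq j
      simp only [Finsupp.tsub_apply, Finsupp.add_apply] at *
      omega
    rw [hidx]
  · rw [if_neg (fun hc => hq (hiff.mp hc)), if_neg hq]

lemma coeff_pow_congr (j : ℕ) : ∀ (m : Fin 3 →₀ ℕ) (f g : MvPowerSeries (Fin 3) k),
    (∀ μ, μ ≤ m → MvPowerSeries.coeff μ f = MvPowerSeries.coeff μ g) →
    MvPowerSeries.coeff m (f ^ j) = MvPowerSeries.coeff m (g ^ j) := by
  induction j with
  | zero => simp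
  | succ j ih =>
    intro m f g h
    rw [pow_succ, pow_succ, MvPowerSeries.coeff_mul, MvPowerSeries.coeff_mul]
    apply Finset.sum_congr rfl
    intro p hp
    rw [Finset.HasAntidiagonal.mem_antidiagonal] at hp
    have hp1 : p.1 ≤ m := by rw [← hp]; exact le_self_add
    have hp2 : p.2 ≤ m := by rw [← hp]; exact le_add_self
    rw [ih p.1 f g (fun μ hμ => h μ (hμ.trans hp1)), h p.2 hp2]

lemma coeff_pow_congr_below {m : Fin 3 →₀ ℕ} {f g : MvPowerSeries (Fin 3) k}
    (hf : MvPowerSeries.constantCoeff f = 0)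
    (hg : MvPowerSeries.constantCoeff g = 0)
    (h : ∀ μ, μ ≤ m → μ ≠ m → MvPowerSeries.coeff μ f = MvPowerSeries.coeff μ g)
    {j : ℕ} (hj : 2 ≤ j) :
    MvPowerSeries.coeff m (f ^ j) = MvPowerSeries.coeff m (g ^ j) := by
  obtain ⟨i, rfl⟩ : ∃ i, j = i + 1 := ⟨j - 1, by omega⟩
  have hi : 1 ≤ i := by omega
  rw [pow_succ, pow_succ, MvPowerSeries.coeff_mul, MvPowerSeries.coeff_mul]
  apply Finset.sum_congr rfl
  intro p hp
  rw [Finset.HasAntidiagonal.mem_antidiagonal] at hp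
  have hp1 : p.1 ≤ m := by rw [← hp]; exact le_self_add
  have hp2 : p.2 ≤ m := by rw [← hp]; exact le_add_self
  by_cases h2 : p.2 = m
  · have h1 : p.1 = 0 := by
      have h4 := hp
      rw [h2] at h4
      apply add_left_injective m
      show p.1 + m = 0 + m
      rw [zero_add]
      exact h4
    have hzf : MvPowerSeries.coeff p.1 (f ^ i) = 0 := by
      rw [h1, MvPowerSeries.coeff_zero_eq_constantCoeff_apply, map_pow, hf,
        zero_pow (by omega)]
    have hzg : MvPowerSeries.coeff p.1 (g ^ i) = 0 := by
      rw [h1, MvPowerSeries.coeff_zero_eq_constantCoeff_apply, map_pow, hg,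
        zero_pow (by omega)]
    rw [hzf, hzg, zero_mul, zero_mul]
  · by_cases h0 : p.2 = 0
    · rw [h0]
      simp only [MvPowerSeries.coeff_zero_eq_constantCoeff_apply, hf, hg, mul_zero]
    · have hp1m : p.1 ≠ m := by
        intro hc
        apply h0
        have h5 : m + p.2 = m + 0 := by rw [add_zero, ← hc]; exact hp.trans hc.symm
        exact add_left_cancel h5
      rw [h p.2 hp2 h2, coeff_pow_congr i p.1 f g ?_]
      intro μ hμ
      apply h μ (hμ.trans hp1)
      intro hc
      exact hp1m (le_antisymm hp1 (hc ▸ hμ))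

section Root
variable [CharZero k]

/-- The higher-order part of the binomial expansion, as a coefficient function. -/
noncomputable def junk (n : ℕ) (ξ : MvPowerSeries (Fin 3) k) (m : Fin 3 →₀ ℕ) : k :=
  ∑ j ∈ Finset.Icc 2 n, (n.choose j : k) * MvPowerSeries.coeff m (ξ ^ j)

/-- Successive approximations to the `n`-th root of `1 + τ`. -/
noncomputable def app (n : ℕ) (τ : MvPowerSeries (Fin 3) k) : ℕ → MvPowerSeries (Fin 3) k
  | 0 => 0
  | d + 1 => fun m => if m 0 + m 1 + m 2 ≤ d then
      (MvPowerSeries.coeff m τ - junk n (app n τ d) m) * (n : k)⁻¹ else 0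

variable {n : ℕ} {τ : MvPowerSeries (Fin 3) k}

lemma junk_congr {ξ ξ' : MvPowerSeries (Fin 3) k}
    (hξ : MvPowerSeries.constantCoeff ξ = 0)
    (hξ' : MvPowerSeries.constantCoeff ξ' = 0) {m : Fin 3 →₀ ℕ}
    (h : ∀ μ, μ ≤ m → μ ≠ m → MvPowerSeries.coeff μ ξ = MvPowerSeries.coeff μ ξ') :
    junk n ξ m = junk n ξ' m := by
  apply Finset.sum_congr rfl
  intro j hj
  rw [Finset.mem_Icc] at hj
  rw [coeff_pow_congr_below hξ hξ' h hj.1]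

lemma app_constantCoeff (hτ : MvPowerSeries.constantCoeff τ = 0) :
    ∀ d, MvPowerSeries.constantCoeff (app n τ d) = 0 := by
  intro d
  induction d with
  | zero => rfl
  | succ d ih =>
    show app n τ (d + 1) 0 = 0
    have hjunk : junk n (app n τ d) 0 = 0 := by
      apply Finset.sum_eq_zero
      intro j hj
      rw [Finset.mem_Icc] at hj
      rw [MvPowerSeries.coeff_zero_eq_constantCoeff_apply, map_pow, ih,
        zero_pow (by omega), mul_zero]
    show (if (0 : Fin 3 →₀ ℕ) 0 + (0 : Fin 3 →₀ ℕ) 1 + (0 : Fin 3 →₀ ℕ) 2 ≤ d then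
      (MvPowerSeries.coeff 0 τ - junk n (app n τ d) 0) * (n : k)⁻¹ else 0) = 0
    rw [if_pos (by simp), hjunk, MvPowerSeries.coeff_zero_eq_constantCoeff_apply, hτ]
    ring

lemma app_stable (hτ : MvPowerSeries.constantCoeff τ = 0) :
    ∀ d (m : Fin 3 →₀ ℕ), m 0 + m 1 + m 2 < d → app n τ (d + 1) m = app n τ d m := by
  intro d
  induction d with
  | zero => intro m h; omega
  | succ d ih =>
    intro m hm
    show (if m 0 + m 1 + m 2 ≤ d + 1 then
        (MvPowerSeries.coeff m τ - junk n (app n τ (d + 1)) m) * (n : k)⁻¹ else 0) =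
      (if m 0 + m 1 + m 2 ≤ d then
        (MvPowerSeries.coeff m τ - junk n (app n τ d) m) * (n : k)⁻¹ else 0)
    rw [if_pos (by omega), if_pos (by omega)]
    congr 1
    congr 1
    apply junk_congr (app_constantCoeff hτ _) (app_constantCoeff hτ _)
    intro μ hμ hne
    have hdeg := fin3_deg_lt hμ hne
    show app n τ (d + 1) μ = app n τ d μ
    exact ih μ (by omega)

lemma app_spec (hτ : MvPowerSeries.constantCoeff τ = 0) :
    ∀ d (m : Fin 3 →₀ ℕ), m 0 + m 1 + m 2 < d →
      app n τ d m = app n τ (m 0 + m 1 + m 2 + 1) m := by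
  intro d
  induction d with
  | zero => intro m h; omega
  | succ d ih =>
    intro m hm
    by_cases h : m 0 + m 1 + m 2 < d
    · rw [app_stable hτ d m h]
      exact ih m h
    · have : d = m 0 + m 1 + m 2 := by omega
      subst this
      rfl

/-- The `n`-th root of `1 + τ` minus `1`. -/
noncomputable def xiRoot (n : ℕ) (τ : MvPowerSeries (Fin 3) k) : MvPowerSeries (Fin 3) k :=
  fun m => app n τ (m 0 + m 1 + m 2 + 1) m

lemma xiRoot_constantCoeff (hτ : MvPowerSeries.constantCoeff τ = 0) :
    MvPowerSeries.constantCoeff (xiRoot n τ) = 0 := by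
  show xiRoot n τ 0 = 0
  show app n τ ((0 : Fin 3 →₀ ℕ) 0 + (0 : Fin 3 →₀ ℕ) 1 + (0 : Fin 3 →₀ ℕ) 2 + 1) 0 = 0
  simp only [Finsupp.coe_zero, Pi.zero_apply]
  exact app_constantCoeff hτ 1

lemma xiRoot_eq_app (hτ : MvPowerSeries.constantCoeff τ = 0)
    {d : ℕ} {m : Fin 3 →₀ ℕ} (h : m 0 + m 1 + m 2 < d) :
    MvPowerSeries.coeff m (xiRoot n τ) = app n τ d m := by
  rw [MvPowerSeries.coeff_apply]
  exact (app_spec hτ d m h).symm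

lemma one_add_xiRoot_pow (hn : 1 ≤ n) (hτ : MvPowerSeries.constantCoeff τ = 0) :
    (1 + xiRoot n τ) ^ n = 1 + τ := by
  set ξ := xiRoot n τ with hξdef
  have hξcc := xiRoot_constantCoeff (n := n) hτ
  have hpow : (1 + ξ) ^ n =
      ∑ j ∈ Finset.range (n + 1), (n.choose j : MvPowerSeries (Fin 3) k) * ξ ^ j := by
    rw [add_comm 1 ξ, add_pow]
    apply Finset.sum_congr rfl
    intros j hj
    rw [one_pow, mul_one]
    ring
  ext m
  rw [hpow, map_sum]
  have hcast : ∀ j, (n.choose j : MvPowerSeries (Fin 3) k) =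
      MvPowerSeries.C (n.choose j : k) := fun j =>
    (map_natCast (MvPowerSeries.C) (n.choose j)).symm
  have hterm : ∀ j, MvPowerSeries.coeff m ((n.choose j : MvPowerSeries (Fin 3) k) * ξ ^ j) =
      (n.choose j : k) * MvPowerSeries.coeff m (ξ ^ j) := by
    intro j
    rw [hcast j, MvPowerSeries.coeff_C_mul]
  rw [Finset.sum_congr rfl (fun j _ => hterm j)]
  have hsplit : Finset.range (n + 1) = insert 0 (insert 1 (Finset.Icc 2 n)) := by
    ext x
    simp only [Finset.mem_range, Finset.mem_insert, Finset.mem_Icc]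
    omega
  rw [hsplit, Finset.sum_insert (by simp), Finset.sum_insert (by simp)]
  have h0 : (n.choose 0 : k) * MvPowerSeries.coeff m (ξ ^ 0) =
      MvPowerSeries.coeff m 1 := by
    rw [Nat.choose_zero_right, pow_zero]
    push_cast
    ring
  have h1 : (n.choose 1 : k) * MvPowerSeries.coeff m (ξ ^ 1) =
      (n : k) * MvPowerSeries.coeff m ξ := by
    rw [Nat.choose_one_right, pow_one]
  rw [h0, h1, map_add]
  have hξm : MvPowerSeries.coeff m ξ =
      (MvPowerSeries.coeff m τ - junk n (app n τ (m 0 + m 1 + m 2)) m) * (n : k)⁻¹ := by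
    rw [xiRoot_eq_app hτ (by omega : m 0 + m 1 + m 2 < m 0 + m 1 + m 2 + 1)]
    show (if m 0 + m 1 + m 2 ≤ m 0 + m 1 + m 2 then _ else 0) = _
    rw [if_pos le_rfl]
  have hjunk : junk n (app n τ (m 0 + m 1 + m 2)) m = junk n ξ m := by
    apply junk_congr (app_constantCoeff hτ _) hξcc
    intro μ hμ hne
    have hdeg := fin3_deg_lt hμ hne
    rw [MvPowerSeries.coeff_apply]
    exact (xiRoot_eq_app hτ hdeg).symm
  have hsum : ∑ x ∈ Finset.Icc 2 n, (n.choose x : k) * MvPowerSeries.coeff m (ξ ^ x) =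
      junk n ξ m := rfl
  have hnz : (n : k) ≠ 0 := Nat.cast_ne_zero.mpr (by omega)
  rw [hsum, ← hjunk, hξm]
  field_simp
  ring
end Root

lemma exists_nth_root [CharZero k] [IsAlgClosed k] {n : ℕ} (hn : 1 ≤ n) (ε : MvPowerSeries (Fin 3) k)
    (hε : MvPowerSeries.constantCoeff ε ≠ 0) :
    ∃ η : MvPowerSeries (Fin 3) k,
      MvPowerSeries.constantCoeff η ≠ 0 ∧ η ^ n = ε := by
  obtain ⟨c, hc⟩ := IsAlgClosed.exists_pow_nat_eq (MvPowerSeries.constantCoeff ε)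
    (show 0 < n by omega)
  have hc0 : c ≠ 0 := by
    intro h
    rw [h, zero_pow (by omega)] at hc
    exact hε hc.symm
  set ε' := (MvPowerSeries.C c⁻¹) ^ n * ε with hε'def
  have hcc' : MvPowerSeries.constantCoeff ε' = 1 := by
    rw [hε'def, map_mul, map_pow, MvPowerSeries.constantCoeff_C, ← hc]
    field_simp
    rw [← mul_pow, one_div, inv_mul_cancel₀ hc0, one_pow]
  set τ := ε' - 1 with hτdef
  have hτcc : MvPowerSeries.constantCoeff τ = 0 := by
    rw [hτdef, map_sub, map_one, hcc', sub_self]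
  refine ⟨MvPowerSeries.C c * (1 + xiRoot n τ), ?_, ?_⟩
  · rw [map_mul, MvPowerSeries.constantCoeff_C, map_add, map_one,
      xiRoot_constantCoeff hτcc, add_zero, mul_one]
    exact hc0
  · rw [mul_pow, one_add_xiRoot_pow hn hτcc, hτdef, add_sub_cancel, hε'def,
      ← mul_assoc, ← mul_pow, ← map_mul, mul_inv_cancel₀ hc0, map_one, one_pow, one_mul]

lemma exists_zpow_root [CharZero k] [IsAlgClosed k] (ε : (MvPowerSeries (Fin 3) k)ˣ) {n : ℤ} (hn : n ≠ 0) :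
    ∃ η : (MvPowerSeries (Fin 3) k)ˣ, η ^ n = ε := by
  have hpos : ∀ (ε' : (MvPowerSeries (Fin 3) k)ˣ) (j : ℕ), 1 ≤ j →
      ∃ η : (MvPowerSeries (Fin 3) k)ˣ, η ^ (j : ℤ) = ε' := by
    intro ε' j hj
    have hcc : MvPowerSeries.constantCoeff (ε' : MvPowerSeries (Fin 3) k) ≠ 0 := by
      have := (MvPowerSeries.isUnit_iff_constantCoeff).mp ε'.isUnit
      exact this.ne_zero
    obtain ⟨η, hηcc, hηpow⟩ := exists_nth_root hj (ε' : MvPowerSeries (Fin 3) k) hcc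
    have hηu : IsUnit η := MvPowerSeries.isUnit_iff_constantCoeff.mpr
      (isUnit_iff_ne_zero.mpr hηcc)
    refine ⟨hηu.unit, ?_⟩
    rw [zpow_natCast]
    apply Units.ext
    rw [Units.val_pow_eq_pow_val, IsUnit.unit_spec]
    exact hηpow
  rcases lt_or_gt_of_ne hn with h | h
  · obtain ⟨η, hη⟩ := hpos ε (-n).toNat (by omega)
    refine ⟨η⁻¹, ?_⟩
    rw [inv_zpow, ← zpow_neg, ← hη]
    congr 1
    omega
  · obtain ⟨η, hη⟩ := hpos ε n.toNat (by omega)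
    refine ⟨η, ?_⟩
    rw [← hη]
    congr 1
    omega

lemma coeff_single_X_mul (i j : Fin 3) (t : MvPowerSeries (Fin 3) k) :
    MvPowerSeries.coeff (Finsupp.single j 1) (X i * t) =
      if i = j then MvPowerSeries.constantCoeff t else 0 := by
  rw [X_def, MvPowerSeries.coeff_monomial_mul]
  by_cases hij : i = j
  · subst hij
    rw [if_pos le_rfl, if_pos rfl, tsub_self, one_mul,
      MvPowerSeries.coeff_zero_eq_constantCoeff_apply]
  · rw [if_neg, if_neg hij]
    rw [Finsupp.single_le_iff, Finsupp.single_apply, if_neg (fun hc => hij hc.symm)]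
    omega

lemma span_of_cross_zero (a b c d e f x y z : ℚ)
    (hc : (b * f - c * e) * x + (c * d - a * f) * y + (a * e - b * d) * z = 0)
    (hnz : ¬(b * f - c * e = 0 ∧ c * d - a * f = 0 ∧ a * e - b * d = 0)) :
    ∃ s t : ℚ, x = s * a + t * d ∧ y = s * b + t * e ∧ z = s * c + t * f := by
  by_cases h2 : a * e - b * d ≠ 0
  · refine ⟨(x * e - y * d) / (a * e - b * d), (y * a - x * b) / (a * e - b * d), ?_, ?_, ?_⟩
    · rw [div_mul_eq_mul_div, div_mul_eq_mul_div, ← add_div, eq_div_iff h2]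
      ring
    · rw [div_mul_eq_mul_div, div_mul_eq_mul_div, ← add_div, eq_div_iff h2]
      ring
    · rw [div_mul_eq_mul_div, div_mul_eq_mul_div, ← add_div, eq_div_iff h2]
      linear_combination hc
  · by_cases h1 : c * d - a * f ≠ 0
    · refine ⟨(z * d - x * f) / (c * d - a * f), (x * c - z * a) / (c * d - a * f), ?_, ?_, ?_⟩
      · rw [div_mul_eq_mul_div, div_mul_eq_mul_div, ← add_div, eq_div_iff h1]
        ring
      · rw [div_mul_eq_mul_div, div_mul_eq_mul_div, ← add_div, eq_div_iff h1]
        linear_combination hc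
      · rw [div_mul_eq_mul_div, div_mul_eq_mul_div, ← add_div, eq_div_iff h1]
        ring
    · have h0 : b * f - c * e ≠ 0 := by
        intro hc0
        exact hnz ⟨hc0, not_not.mp h1, not_not.mp h2⟩
      refine ⟨(y * f - z * e) / (b * f - c * e), (z * b - y * c) / (b * f - c * e), ?_, ?_, ?_⟩
      · rw [div_mul_eq_mul_div, div_mul_eq_mul_div, ← add_div, eq_div_iff h0]
        linear_combination hc
      · rw [div_mul_eq_mul_div, div_mul_eq_mul_div, ← add_div, eq_div_iff h0]
        ring
      · rw [div_mul_eq_mul_div, div_mul_eq_mul_div, ← add_div, eq_div_iff h0]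
        ring

/-- Integer determinant `det(A, B, μ)`. -/
def mdot (A B μ : Fin 3 →₀ ℕ) : ℤ :=
  ((A 1 : ℤ) * B 2 - (A 2 : ℤ) * B 1) * μ 0 + ((A 2 : ℤ) * B 0 - (A 0 : ℤ) * B 2) * μ 1 +
    ((A 0 : ℤ) * B 1 - (A 1 : ℤ) * B 0) * μ 2

lemma Dop_coeff (A B : Fin 3 →₀ ℕ) (w : MvPowerSeries (Fin 3) k) (μ : Fin 3 →₀ ℕ) :
    MvPowerSeries.coeff μ (Dop A B w) =
      ((mdot A B μ : ℤ) : k) * MvPowerSeries.coeff μ w := by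
  rw [MvPowerSeries.coeff_apply]; rfl


end Helpers

set_option maxHeartbeats 1000000 in
/-- Case 4 of Lemma 3.2: if `u = x^a y^b z^c`, `v = x^d y^e z^f` with `(a,b,c)`, `(d,e,f)`
linearly independent over `ℚ`, and the Jacobian determinant of `(u,v,w)` is a monomial
`x^p y^q z^r` times a unit, then after a change of regular parameters `x̄, ȳ, z̄` preserving
the monomial forms of `u` and `v`, one has `w = G + N` where `N = x̄^g ȳ^h z̄^i` has exponent
vector `ℚ`-independent from `(a,b,c)`, `(d,e,f)`, and every monomial of `G` has exponent
vector in the `ℚ`-span of `(a,b,c)`, `(d,e,f)` and is not divisible by `N`. -/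
theorem normal_form_case4
    (k : Type*) [Field k] [IsAlgClosed k] [CharZero k]
    (a b c d e f : ℕ)
    (hrank : LinearIndependent ℚ ![![(a : ℚ), (b : ℚ), (c : ℚ)], ![(d : ℚ), (e : ℚ), (f : ℚ)]])
    (u v w : MvPowerSeries (Fin 3) k)
    (hu : u = (MvPowerSeries.X 0) ^ a * (MvPowerSeries.X 1) ^ b * (MvPowerSeries.X 2) ^ c)
    (hv : v = (MvPowerSeries.X 0) ^ d * (MvPowerSeries.X 1) ^ e * (MvPowerSeries.X 2) ^ f)
    (p q r : ℕ) (δ : MvPowerSeries (Fin 3) k) (hδ : IsUnit δ)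
    (hJ : mvJacobian u v w =
      (MvPowerSeries.X 0) ^ p * (MvPowerSeries.X 1) ^ q * (MvPowerSeries.X 2) ^ r * δ) :
    ∃ (xbar ybar zbar : MvPowerSeries (Fin 3) k) (g h i : ℕ) (G : MvPowerSeries (Fin 3) k),
      IsRegularSystem xbar ybar zbar ∧
      u = xbar ^ a * ybar ^ b * zbar ^ c ∧
      v = xbar ^ d * ybar ^ e * zbar ^ f ∧
      LinearIndependent ℚ
        ![![(a : ℚ), (b : ℚ), (c : ℚ)], ![(d : ℚ), (e : ℚ), (f : ℚ)],
          ![(g : ℚ), (h : ℚ), (i : ℚ)]] ∧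
      (∀ n : Fin 3 →₀ ℕ, MvPowerSeries.coeff n G ≠ 0 →
        (∃ s t : ℚ, (n 0 : ℚ) = s * a + t * d ∧ (n 1 : ℚ) = s * b + t * e ∧
          (n 2 : ℚ) = s * c + t * f) ∧
        ¬(g ≤ n 0 ∧ h ≤ n 1 ∧ i ≤ n 2)) ∧
      w = subst3 G xbar ybar zbar + xbar ^ g * ybar ^ h * zbar ^ i := by
  classical
  set A : Fin 3 →₀ ℕ := Finsupp.single 0 a + Finsupp.single 1 b + Finsupp.single 2 c with hA
  set B : Fin 3 →₀ ℕ := Finsupp.single 0 d + Finsupp.single 1 e + Finsupp.single 2 f with hB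
  have hA0 : A 0 = a := by simp [hA, Finsupp.single_apply]
  have hA1 : A 1 = b := by simp [hA, Finsupp.single_apply]
  have hA2 : A 2 = c := by simp [hA, Finsupp.single_apply]
  have hB0 : B 0 = d := by simp [hB, Finsupp.single_apply]
  have hB1 : B 1 = e := by simp [hB, Finsupp.single_apply]
  have hB2 : B 2 = f := by simp [hB, Finsupp.single_apply]
  have hu' : u = monomial A 1 := by rw [hu, mono3]
  have hv' : v = monomial B 1 := by rw [hv, mono3]
  set Q : Fin 3 →₀ ℕ :=
    Finsupp.single 0 (p + 1) + Finsupp.single 1 (q + 1) + Finsupp.single 2 (r + 1) with hQ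
  have hQ0 : Q 0 = p + 1 := by simp [hQ, Finsupp.single_apply]
  have hQ1 : Q 1 = q + 1 := by simp [hQ, Finsupp.single_apply]
  have hQ2 : Q 2 = r + 1 := by simp [hQ, Finsupp.single_apply]
  have hmain : monomial (A + B) 1 * Dop A B w = monomial Q 1 * δ := by
    rw [← jac_main A B w, ← hu', ← hv', hJ, ← mono3]
    ring
  have hδ0 : MvPowerSeries.constantCoeff δ ≠ 0 :=
    ((MvPowerSeries.isUnit_iff_constantCoeff).mp hδ).ne_zero
  obtain ⟨hSQ, hD⟩ := cancel_monomial hδ0 hmain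
  have hle0 : a + d ≤ p + 1 := by
    have := Finsupp.le_def.mp hSQ 0
    rwa [Finsupp.add_apply, hA0, hB0, hQ0] at this
  have hle1 : b + e ≤ q + 1 := by
    have := Finsupp.le_def.mp hSQ 1
    rwa [Finsupp.add_apply, hA1, hB1, hQ1] at this
  have hle2 : c + f ≤ r + 1 := by
    have := Finsupp.le_def.mp hSQ 2
    rwa [Finsupp.add_apply, hA2, hB2, hQ2] at this
  set gg : ℕ := p + 1 - (a + d) with hgg
  set hh : ℕ := q + 1 - (b + e) with hhh
  set ii : ℕ := r + 1 - (c + f) with hii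
  set N : Fin 3 →₀ ℕ := Finsupp.single 0 gg + Finsupp.single 1 hh + Finsupp.single 2 ii with hN
  have hN0 : N 0 = gg := by simp [hN, Finsupp.single_apply]
  have hN1 : N 1 = hh := by simp [hN, Finsupp.single_apply]
  have hN2 : N 2 = ii := by simp [hN, Finsupp.single_apply]
  have hQsum : Q = (A + B) + N := by
    ext j
    fin_cases j
    · show Q 0 = (A + B + N) 0
      rw [hQ0, Finsupp.add_apply, Finsupp.add_apply, hA0, hB0, hN0]
      omega
    · show Q 1 = (A + B + N) 1
      rw [hQ1, Finsupp.add_apply, Finsupp.add_apply, hA1, hB1, hN1]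
      omega
    · show Q 2 = (A + B + N) 2
      rw [hQ2, Finsupp.add_apply, Finsupp.add_apply, hA2, hB2, hN2]
      omega
  have hQN : Q - (A + B) = N := by rw [hQsum, add_tsub_cancel_left]
  rw [hQN] at hD
  have key : ∀ μ, ((mdot A B μ : ℤ) : k) * MvPowerSeries.coeff μ w =
      MvPowerSeries.coeff μ (monomial N 1 * δ) := by
    intro μ
    rw [← Dop_coeff]
    exact hD μ
  have keyN : ((mdot A B N : ℤ) : k) * MvPowerSeries.coeff N w =
      MvPowerSeries.constantCoeff δ := by
    have h1 := key N
    rwa [MvPowerSeries.coeff_monomial_mul, if_pos le_rfl, tsub_self, one_mul,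
      MvPowerSeries.coeff_zero_eq_constantCoeff_apply] at h1
  have hmdN : mdot A B N ≠ 0 := by
    intro hc
    apply hδ0
    rw [← keyN, hc]
    simp
  have hwN : MvPowerSeries.coeff N w ≠ 0 := by
    intro hc
    apply hδ0
    rw [← keyN, hc, mul_zero]
  have keyNot : ∀ μ, ¬N ≤ μ → mdot A B μ ≠ 0 → MvPowerSeries.coeff μ w = 0 := by
    intro μ h1 h2
    have h3 := key μ
    rw [MvPowerSeries.coeff_monomial_mul, if_neg h1] at h3
    rcases mul_eq_zero.mp h3 with h4 | h4
    · exact absurd (by exact_mod_cast h4) h2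
    · exact h4
  have hNle : ∀ μ : Fin 3 →₀ ℕ, N ≤ μ ↔ (gg ≤ μ 0 ∧ hh ≤ μ 1 ∧ ii ≤ μ 2) := by
    intro μ
    rw [fin3_le_iff, hN0, hN1, hN2]
  set G : MvPowerSeries (Fin 3) k := fun μ =>
    if mdot A B μ = 0 ∧ ¬(gg ≤ μ 0 ∧ hh ≤ μ 1 ∧ ii ≤ μ 2) then MvPowerSeries.coeff μ w
    else 0 with hG
  have hGcoeff : ∀ μ, MvPowerSeries.coeff μ G =
      if mdot A B μ = 0 ∧ ¬(gg ≤ μ 0 ∧ hh ≤ μ 1 ∧ ii ≤ μ 2) then MvPowerSeries.coeff μ w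
      else 0 := by
    intro μ
    rw [MvPowerSeries.coeff_apply, hG]
  set ε : MvPowerSeries (Fin 3) k := fun t =>
    MvPowerSeries.coeff (N + t) w - MvPowerSeries.coeff (N + t) G with hεdef
  have hεapp : ∀ t, MvPowerSeries.coeff t ε =
      MvPowerSeries.coeff (N + t) w - MvPowerSeries.coeff (N + t) G := by
    intro t
    rw [MvPowerSeries.coeff_apply, hεdef]
  have hWeq : monomial N 1 * ε = w - G := by
    ext μ
    rw [MvPowerSeries.coeff_monomial_mul, map_sub]
    by_cases hle : N ≤ μ
    · rw [if_pos hle, one_mul, hεapp, add_tsub_cancel_of_le hle]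
    · rw [if_neg hle]
      by_cases hz : mdot A B μ = 0
      · have hGμ : MvPowerSeries.coeff μ G = MvPowerSeries.coeff μ w := by
          rw [hGcoeff, if_pos ⟨hz, fun hc => hle ((hNle μ).mpr hc)⟩]
        rw [hGμ, sub_self]
      · have hw0 := keyNot μ hle hz
        have hGμ : MvPowerSeries.coeff μ G = 0 := by
          rw [hGcoeff, if_neg (fun hc => hz hc.1)]
        rw [hw0, hGμ, sub_zero]
  have hGN : MvPowerSeries.coeff N G = 0 := by
    rw [hGcoeff, if_neg]
    intro hc
    exact hc.2 ⟨by rw [hN0], by rw [hN1], by rw [hN2]⟩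
  have hεcc : MvPowerSeries.constantCoeff ε ≠ 0 := by
    rw [← MvPowerSeries.coeff_zero_eq_constantCoeff_apply, hεapp, add_zero, hGN, sub_zero]
    exact hwN
  have hεu : IsUnit ε :=
    MvPowerSeries.isUnit_iff_constantCoeff.mpr (isUnit_iff_ne_zero.mpr hεcc)
  obtain ⟨η, hη⟩ := exists_zpow_root hεu.unit hmdN
  set m0 : ℤ := (b : ℤ) * f - (c : ℤ) * e with hm0
  set m1 : ℤ := (c : ℤ) * d - (a : ℤ) * f with hm1
  set m2 : ℤ := (a : ℤ) * e - (b : ℤ) * d with hm2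
  have hmdot : ∀ μ : Fin 3 →₀ ℕ, mdot A B μ = m0 * μ 0 + m1 * μ 1 + m2 * μ 2 := by
    intro μ
    rw [mdot, hA0, hA1, hA2, hB0, hB1, hB2, hm0, hm1, hm2]
  set xb : MvPowerSeries (Fin 3) k := X 0 * ((η ^ m0 : (MvPowerSeries (Fin 3) k)ˣ) :
    MvPowerSeries (Fin 3) k) with hxb
  set yb : MvPowerSeries (Fin 3) k := X 1 * ((η ^ m1 : (MvPowerSeries (Fin 3) k)ˣ) :
    MvPowerSeries (Fin 3) k) with hyb
  set zb : MvPowerSeries (Fin 3) k := X 2 * ((η ^ m2 : (MvPowerSeries (Fin 3) k)ˣ) :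
    MvPowerSeries (Fin 3) k) with hzb
  have hbar : ∀ α β γ : ℕ, xb ^ α * yb ^ β * zb ^ γ =
      monomial (Finsupp.single 0 α + Finsupp.single 1 β + Finsupp.single 2 γ) 1 *
        ((η ^ (m0 * α + m1 * β + m2 * γ) : (MvPowerSeries (Fin 3) k)ˣ) :
          MvPowerSeries (Fin 3) k) := by
    intro α β γ
    rw [hxb, hyb, hzb, mul_pow, mul_pow, mul_pow]
    rw [show ∀ x1 x2 x3 y1 y2 y3 : MvPowerSeries (Fin 3) k,
      x1 * y1 * (x2 * y2) * (x3 * y3) = x1 * x2 * x3 * (y1 * y2 * y3) from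
      fun _ _ _ _ _ _ => by ring]
    rw [mono3]
    congr 1
    rw [← Units.val_pow_eq_pow_val, ← Units.val_pow_eq_pow_val, ← Units.val_pow_eq_pow_val,
      ← Units.val_mul, ← Units.val_mul]
    congr 1
    rw [← zpow_natCast (η ^ m0) α, ← zpow_natCast (η ^ m1) β, ← zpow_natCast (η ^ m2) γ,
      ← zpow_mul, ← zpow_mul, ← zpow_mul, ← zpow_add, ← zpow_add]
  have hccX : ∀ (i : Fin 3) (t : (MvPowerSeries (Fin 3) k)ˣ),
      MvPowerSeries.constantCoeff (X i * (t : MvPowerSeries (Fin 3) k)) = 0 := by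
    intro i t
    rw [map_mul, MvPowerSeries.constantCoeff_X, zero_mul]
  refine ⟨xb, yb, zb, gg, hh, ii, G, ?_, ?_, ?_, ?_, ?_, ?_⟩
  · refine ⟨by rw [hxb]; exact hccX _ _, by rw [hyb]; exact hccX _ _,
      by rw [hzb]; exact hccX _ _, ?_⟩
    rw [Matrix.det_fin_three]
    simp only [Matrix.of_apply, Matrix.cons_val', Matrix.cons_val_zero, Matrix.empty_val',
      Matrix.cons_val_fin_one, Matrix.cons_val_one, Matrix.head_cons, Matrix.head_fin_const,
      Matrix.cons_val_two, Matrix.tail_cons, hxb, hyb, hzb, coeff_single_X_mul]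
    norm_num [Fin.ext_iff]
    refine ⟨⟨?_, ?_⟩, ?_⟩ <;>
      exact (MvPowerSeries.isUnit_iff_constantCoeff.mp (Units.isUnit _)).ne_zero
  · rw [hbar a b c,
      show m0 * (a : ℤ) + m1 * (b : ℤ) + m2 * (c : ℤ) = 0 by
        rw [hm0, hm1, hm2]; push_cast; ring,
      zpow_zero, Units.val_one, mul_one, hu, mono3]
  · rw [hbar d e f,
      show m0 * (d : ℤ) + m1 * (e : ℤ) + m2 * (f : ℤ) = 0 by
        rw [hm0, hm1, hm2]; push_cast; ring,
      zpow_zero, Units.val_one, mul_one, hv, mono3]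
  · have hdet : ((mdot A B N : ℤ) : ℚ) ≠ 0 := Int.cast_ne_zero.mpr hmdN
    have hUnit : IsUnit (Matrix.of ![![(a : ℚ), (b : ℚ), (c : ℚ)],
        ![(d : ℚ), (e : ℚ), (f : ℚ)], ![(gg : ℚ), (hh : ℚ), (ii : ℚ)]]) := by
      rw [Matrix.isUnit_iff_isUnit_det, isUnit_iff_ne_zero, Matrix.det_fin_three]
      simp only [Matrix.of_apply, Matrix.cons_val', Matrix.cons_val_zero, Matrix.empty_val',
        Matrix.cons_val_fin_one, Matrix.cons_val_one, Matrix.head_cons, Matrix.head_fin_const,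
        Matrix.cons_val_two, Matrix.tail_cons]
      intro hc
      apply hdet
      rw [hmdot N, hN0, hN1, hN2, hm0, hm1, hm2]
      push_cast
      linear_combination hc
    exact Matrix.linearIndependent_rows_iff_isUnit.mpr hUnit
  · intro n hn
    rw [hGcoeff] at hn
    by_cases hcond : mdot A B n = 0 ∧ ¬(gg ≤ n 0 ∧ hh ≤ n 1 ∧ ii ≤ n 2)
    · refine ⟨?_, hcond.2⟩
      have hzz := hcond.1
      rw [hmdot n, hm0, hm1, hm2] at hzz
      have hzq : (((b : ℚ) * f - (c : ℚ) * e) * (n 0 : ℚ) +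
          ((c : ℚ) * d - (a : ℚ) * f) * (n 1 : ℚ) +
          ((a : ℚ) * e - (b : ℚ) * d) * (n 2 : ℚ)) = 0 := by
        have : ((((b : ℤ) * f - (c : ℤ) * e) * (n 0 : ℤ) +
            ((c : ℤ) * d - (a : ℤ) * f) * (n 1 : ℤ) +
            ((a : ℤ) * e - (b : ℤ) * d) * (n 2 : ℤ) : ℤ) : ℚ) = 0 := by
          rw [hzz]; norm_num
        push_cast at this
        linear_combination this
      apply span_of_cross_zero (a : ℚ) (b : ℚ) (c : ℚ) (d : ℚ) (e : ℚ) (f : ℚ)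
        (n 0 : ℚ) (n 1 : ℚ) (n 2 : ℚ) hzq
      rintro ⟨e0, e1, e2⟩
      apply hmdN
      rw [hmdot N, hm0, hm1, hm2]
      have e0' : (b : ℤ) * f - (c : ℤ) * e = 0 := by exact_mod_cast e0
      have e1' : (c : ℤ) * d - (a : ℤ) * f = 0 := by exact_mod_cast e1
      have e2' : (a : ℤ) * e - (b : ℤ) * d = 0 := by exact_mod_cast e2
      rw [e0', e1', e2']
      ring
    · rw [if_neg hcond] at hn
      exact absurd rfl hn
  · have hsub : subst3 G xb yb zb = G := by
      ext m
      rw [MvPowerSeries.coeff_apply]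
      show (∑ᶠ p : ℕ × ℕ × ℕ, MvPowerSeries.coeff
          (Finsupp.single 0 p.1 + Finsupp.single 1 p.2.1 + Finsupp.single 2 p.2.2) G *
          MvPowerSeries.coeff m (xb ^ p.1 * yb ^ p.2.1 * zb ^ p.2.2)) =
        MvPowerSeries.coeff m G
      have hPm : Finsupp.single 0 (m 0) + Finsupp.single 1 (m 1) + Finsupp.single 2 (m 2)
          = m := (fin3_decomp m).symm
      have hPapp : ∀ p : ℕ × ℕ × ℕ,
          ((Finsupp.single 0 p.1 + Finsupp.single 1 p.2.1 + Finsupp.single 2 p.2.2 :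
            Fin 3 →₀ ℕ) 0 = p.1) ∧
          ((Finsupp.single 0 p.1 + Finsupp.single 1 p.2.1 + Finsupp.single 2 p.2.2 :
            Fin 3 →₀ ℕ) 1 = p.2.1) ∧
          ((Finsupp.single 0 p.1 + Finsupp.single 1 p.2.1 + Finsupp.single 2 p.2.2 :
            Fin 3 →₀ ℕ) 2 = p.2.2) := by
        intro p
        refine ⟨?_, ?_, ?_⟩ <;> simp [Finsupp.single_apply]
      have hmono : ∀ p : ℕ × ℕ × ℕ,
          MvPowerSeries.coeff (Finsupp.single 0 p.1 + Finsupp.single 1 p.2.1 +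
            Finsupp.single 2 p.2.2) G ≠ 0 →
          xb ^ p.1 * yb ^ p.2.1 * zb ^ p.2.2 =
            monomial (Finsupp.single 0 p.1 + Finsupp.single 1 p.2.1 +
              Finsupp.single 2 p.2.2) 1 := by
        intro p hp
        set P : Fin 3 →₀ ℕ := Finsupp.single 0 p.1 + Finsupp.single 1 p.2.1 +
          Finsupp.single 2 p.2.2 with hPdef
        have hcond : mdot A B P = 0 := by
          by_contra hcnd
          apply hp
          rw [hGcoeff, if_neg (fun hcc => hcnd hcc.1)]
        rw [hbar p.1 p.2.1 p.2.2,
          show m0 * (p.1 : ℤ) + m1 * (p.2.1 : ℤ) + m2 * (p.2.2 : ℤ) = 0 by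
            rw [← hcond, hmdot P, (hPapp p).1, (hPapp p).2.1, (hPapp p).2.2],
          zpow_zero, Units.val_one, mul_one]
      rw [finsum_eq_single _ (m 0, m 1, m 2)]
      · by_cases hzero : MvPowerSeries.coeff (Finsupp.single 0 (m 0) +
            Finsupp.single 1 (m 1) + Finsupp.single 2 (m 2)) G = 0
        · rw [hzero, zero_mul, ← hPm]
          exact hzero.symm
        · rw [hmono (m 0, m 1, m 2) hzero]
          show MvPowerSeries.coeff _ G * MvPowerSeries.coeff m
            (monomial (Finsupp.single 0 (m 0) + Finsupp.single 1 (m 1) +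
              Finsupp.single 2 (m 2)) 1) = _
          rw [hPm, MvPowerSeries.coeff_monomial_same, mul_one]
      · intro p hp
        by_cases hzero : MvPowerSeries.coeff (Finsupp.single 0 p.1 +
            Finsupp.single 1 p.2.1 + Finsupp.single 2 p.2.2) G = 0
        · rw [hzero, zero_mul]
        · rw [hmono p hzero, MvPowerSeries.coeff_monomial_ne, mul_zero]
          intro hc
          apply hp
          have h0 := (hPapp p).1
          have h1 := (hPapp p).2.1
          have h2 := (hPapp p).2.2
          rw [← hc] at h0 h1 h2
          exact Prod.ext h0.symm (Prod.ext h1.symm h2.symm)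
    have hNpow : xb ^ gg * yb ^ hh * zb ^ ii = monomial N 1 * ε := by
      rw [hbar gg hh ii, ← hN,
        show m0 * (gg : ℤ) + m1 * (hh : ℤ) + m2 * (ii : ℤ) = mdot A B N by
          rw [hmdot N, hN0, hN1, hN2],
        hη, IsUnit.unit_spec]
    rw [hsub, hNpow, hWeq]
    ring
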